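/- Let β be an element of a field, n a natural number, and for each i ∈ Fin n let m_i and n_i be field elements with n_i, n_i+β, and e_i := n_i - m_i nonzero. For functions X, Y : Fin n → {U,L}, define G^X_Y = ∏_i h^{X(i)}_μ(i) / h^{Y(i)}_λ(i), where h^U_μ(i)=m_i, h^L_μ(i)=m_i+β, h^U_λ(i)=n_i, h^L_λ(i)=n_i+β. Then Σ_{X,Y} (-1)^{#U(X)+#U(Y)} G^X_Y = ((-β)^n / ∏_i e_i) · Σ_X (-1)^{#U(X)} G^X_X, where #U(X) counts the indices i with X(i)=U. -/

import Mathlib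

open Finset

lemma sign_prod {F : Type*} [Field F] {n : ℕ} (X : Fin n → Bool) :
    ((-1 : F)) ^ (univ.filter (fun i => X i = true)).card
      = ∏ i, (if X i then (-1 : F) else 1) := by
  rw [Finset.prod_ite, Finset.prod_const, Finset.prod_const, one_pow, mul_one]

/-- multi-box channel redundancy:
`Σ_{X,Y} (-1)^{#U(X)+#U(Y)} G^X_Y = ((-β)^n / ∏ e_i) · Σ_X (-1)^{#U(X)} G^X_X`. -/
theorem stmt5 {F : Type*} [Field F] (β : F) (n : ℕ) (m N : Fin n → F)
    (h1 : ∀ i, N i ≠ 0) (h2 : ∀ i, N i + β ≠ 0) (h3 : ∀ i, N i - m i ≠ 0) :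
    (∑ X : Fin n → Bool, ∑ Y : Fin n → Bool,
        (-1 : F) ^ ((univ.filter (fun i => X i = true)).card
            + (univ.filter (fun i => Y i = true)).card) *
          ∏ i, (if X i then m i else m i + β) / (if Y i then N i else N i + β))
      = ((-β) ^ n / ∏ i, (N i - m i)) *
          ∑ X : Fin n → Bool, (-1 : F) ^ ((univ.filter (fun i => X i = true)).card) *
            ∏ i, (if X i then m i else m i + β) / (if X i then N i else N i + β) := by
  have lhs :
      (∑ X : Fin n → Bool, ∑ Y : Fin n → Bool,
        (-1 : F) ^ ((univ.filter (fun i => X i = true)).card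
            + (univ.filter (fun i => Y i = true)).card) *
          ∏ i, (if X i then m i else m i + β) / (if Y i then N i else N i + β))
      = ∏ i, ∑ a : Bool, ∑ b : Bool,
          (if a = true then (-1 : F) else 1) * (if b = true then (-1 : F) else 1) *
            ((if a = true then m i else m i + β) / (if b = true then N i else N i + β)) := by
    rw [Fintype.prod_sum fun i a => ∑ b : Bool,
        (if a = true then (-1 : F) else 1) * (if b = true then (-1 : F) else 1) *
          ((if a = true then m i else m i + β) / (if b = true then N i else N i + β))]
    refine Finset.sum_congr rfl fun X _ => ?_
    rw [Fintype.prod_sum fun i b =>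
        (if X i then (-1 : F) else 1) * (if b = true then (-1 : F) else 1) *
          ((if X i then m i else m i + β) / (if b = true then N i else N i + β))]
    refine Finset.sum_congr rfl fun Y _ => ?_
    rw [pow_add, sign_prod X, sign_prod Y]
    rw [← Finset.prod_mul_distrib, ← Finset.prod_mul_distrib]
  have hb : ((-β : F)) ^ n / ∏ i, (N i - m i) = ∏ i : Fin n, (-β) / (N i - m i) := by
    rw [Finset.prod_div_distrib, Finset.prod_const, Finset.card_univ, Fintype.card_fin]
  have hsum : (∑ X : Fin n → Bool, (-1 : F) ^ ((univ.filter (fun i => X i = true)).card) *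
          ∏ i, (if X i then m i else m i + β) / (if X i then N i else N i + β))
      = ∏ i, ∑ a : Bool, (if a = true then (-1 : F) else 1) *
          ((if a = true then m i else m i + β) / (if a = true then N i else N i + β)) := by
    rw [Fintype.prod_sum fun i a => (if a = true then (-1 : F) else 1) *
        ((if a = true then m i else m i + β) / (if a = true then N i else N i + β))]
    refine Finset.sum_congr rfl fun X _ => ?_
    rw [sign_prod X, ← Finset.prod_mul_distrib]
  rw [lhs, hsum, hb, ← Finset.prod_mul_distrib]
  refine Finset.prod_congr rfl fun i _ => ?_
  have e1 := h1 i
  have e2 := h2 i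
  have e3 : -m i + N i ≠ 0 := by rw [neg_add_eq_sub]; exact h3 i
  simp only [Fintype.sum_bool, if_true, if_false, Bool.false_eq_true]
  field_simp
  rw [← neg_div, eq_div_iff (h3 i)]
  ring
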